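/- arXiv:2405.08087 — 4 statements merged into one kernel-verified Lean document; each statement's English description precedes it below -/
import Mathlib

section
/- Fix μ, π with affinely independent Bayesian posteriors. If an agent overreacts to some realization s — i.e., the Bayesian posterior x_s equals λμ + (1−λ)x̂_s for some λ ∈ (0,1) with x̂_s ≠ x_s — then x̂_s lies outside the closed convex hull of the set X of Bayesian posteriors, and hence the agent can be exploited. -/
/-- Expected payoff of an action `(α, β)` (payoff `α·z − β`) at belief `z`. -/
noncomputable def pay {Θ : Type*} [Fintype Θ] (a : (Θ → ℝ) × ℝ) (z : Θ → ℝ) : ℝ :=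
  (∑ θ, a.1 θ * z θ) - a.2

/-- Corollary 1: with affinely independent Bayesian posteriors (averaging to the
prior), an agent who overreacts to some realization `s₀` has her posterior
outside the closed convex hull of the Bayesian posteriors, and hence she can be
exploited: for every `K > 0` there is a decision problem (a finite menu of
actions plus the outside option `0`) and an optimal choice rule at the distorted
posteriors whose ex ante expected payoff is `-K`. -/
theorem overreaction_implies_exploitation
    {Θ S : Type*} [Fintype Θ] [Fintype S]
    (μ : Θ → ℝ) (hμpos : ∀ θ, 0 < μ θ) (hμ1 : ∑ θ, μ θ = 1)
    (π : Θ → S → ℝ) (hπ : ∀ θ s, 0 ≤ π θ s) (hπ1 : ∀ θ, ∑ s, π θ s = 1)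
    (hP : ∀ s, 0 < ∑ θ, μ θ * π θ s)
    (x : S → Θ → ℝ)
    (hx : ∀ s θ, x s θ = μ θ * π θ s / ∑ θ', μ θ' * π θ' s)
    (haff : AffineIndependent ℝ x)
    (hbayes : μ = ∑ s, (∑ θ, μ θ * π θ s) • x s)
    (hatx : S → Θ → ℝ) (s₀ : S)
    (hover : ∃ l ∈ Set.Ioo (0 : ℝ) 1, x s₀ = l • μ + (1 - l) • hatx s₀)
    (hne : hatx s₀ ≠ x s₀) :
    hatx s₀ ∉ convexHull ℝ (Set.range x) ∧
    ∀ K > (0 : ℝ), ∃ (A : Finset ((Θ → ℝ) × ℝ)) (c : S → (Θ → ℝ) × ℝ),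
      (∀ s, c s ∈ insert ((0 : Θ → ℝ), (0 : ℝ)) A) ∧
      (∀ s, ∀ a ∈ insert ((0 : Θ → ℝ), (0 : ℝ)) A,
        pay a (hatx s) ≤ pay (c s) (hatx s)) ∧
      ∑ s, (∑ θ, μ θ * π θ s) * pay (c s) (x s) = -K := by
  classical
  obtain ⟨l, hl, hxl⟩ := hover
  set P : S → ℝ := fun s => ∑ θ, μ θ * π θ s with hPdef
  have hPsum : ∑ s, P s = 1 := by
    have : ∑ s, P s = ∑ θ, μ θ * ∑ s, π θ s := by
      rw [Finset.sum_comm (f := fun s θ => μ θ * π θ s)]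
      simp [Finset.mul_sum]
    rw [this]
    simp only [hπ1, mul_one]
    exact hμ1
  -- Part 1: hatx s₀ not in the convex hull
  have hnotmem : hatx s₀ ∉ convexHull ℝ (Set.range x) := by
    intro hmem
    rw [convexHull_range_eq_exists_affineCombination] at hmem
    obtain ⟨t, w, hw0, hw1, hcomb⟩ := hmem
    set q : S → ℝ := fun s => if s ∈ t then w s else 0 with hqdef
    have hq0 : ∀ s, 0 ≤ q s := by
      intro s; simp only [hqdef]; split
      · exact hw0 s ‹_›
      · exact le_rfl
    have hq1 : ∑ s, q s = 1 := by
      simp only [hqdef]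
      rw [Finset.sum_ite_mem, Finset.univ_inter]
      exact hw1
    have hqc : ∑ s, q s • x s = hatx s₀ := by
      rw [← hcomb, Finset.affineCombination_eq_linear_combination _ _ _ hw1]
      simp only [hqdef, ite_smul, zero_smul]
      rw [Finset.sum_ite_mem, Finset.univ_inter]
    -- two affine combinations representing x s₀
    set w1 : S → ℝ := fun s => if s = s₀ then 1 else 0 with hw1def
    set w2 : S → ℝ := fun s => l * P s + (1 - l) * q s with hw2def
    have hsum1 : ∑ s, w1 s = 1 := by simp [hw1def]
    have hsum2 : ∑ s, w2 s = 1 := by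
      simp only [hw2def]
      rw [Finset.sum_add_distrib, ← Finset.mul_sum, ← Finset.mul_sum, hPsum, hq1]
      ring
    have hcomb1 : ∑ s, w1 s • x s = x s₀ := by
      simp [hw1def, ite_smul]
    have hcomb2 : ∑ s, w2 s • x s = x s₀ := by
      simp only [hw2def, add_smul, mul_smul]
      rw [Finset.sum_add_distrib, ← Finset.smul_sum, ← Finset.smul_sum, ← hbayes, hqc]
      exact hxl.symm
    have heq : w1 = w2 := by
      refine (affineIndependent_iff_eq_of_fintype_affineCombination_eq ℝ x).mp haff w1 w2
        hsum1 hsum2 ?_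
      rw [Finset.univ.affineCombination_eq_linear_combination _ _ hsum1,
        Finset.univ.affineCombination_eq_linear_combination _ _ hsum2, hcomb1, hcomb2]
    have hkey : 1 = l * P s₀ + (1 - l) * q s₀ := by
      have := congrFun heq s₀
      simpa [hw1def, hw2def] using this
    -- q s₀ < 1
    have hq_le : q s₀ ≤ 1 := by
      rw [← hq1]
      exact Finset.single_le_sum (fun s _ => hq0 s) (Finset.mem_univ s₀)
    have hqlt : q s₀ < 1 := by
      rcases lt_or_eq_of_le hq_le with h | h
      · exact h
      · exfalso
        have hrest : ∑ s ∈ Finset.univ.erase s₀, q s = 0 := by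
          have := Finset.add_sum_erase Finset.univ q (Finset.mem_univ s₀)
          rw [hq1, h] at this
          linarith
        have hzero : ∀ s ∈ Finset.univ.erase s₀, q s = 0 := by
          intro s hs
          exact (Finset.sum_eq_zero_iff_of_nonneg (fun i _ => hq0 i)).mp hrest s hs
        have : hatx s₀ = x s₀ := by
          rw [← hqc, Finset.sum_eq_single s₀]
          · rw [h, one_smul]
          · intro b _ hb
            rw [hzero b (Finset.mem_erase.mpr ⟨hb, Finset.mem_univ b⟩), zero_smul]
          · intro hb; exact absurd (Finset.mem_univ s₀) hb
        exact hne this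
    have hP_le : P s₀ ≤ 1 := by
      rw [← hPsum]
      exact Finset.single_le_sum (fun s _ => (hP s).le) (Finset.mem_univ s₀)
    obtain ⟨hl0, hl1⟩ := hl
    nlinarith [mul_pos (sub_pos.2 hl1) (sub_pos.2 hqlt), mul_nonneg hl0.le (sub_nonneg.2 hP_le)]
  refine ⟨hnotmem, ?_⟩
  -- Part 2: exploitation
  intro K hK
  obtain ⟨f, u, hfb, hfu⟩ :=
    geometric_hahn_banach_closed_point (convex_convexHull ℝ (Set.range x))
      ((Set.finite_range x).isClosed_convexHull (𝕜 := ℝ)) hnotmem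
  have hfx : ∀ s, f (x s) < u := fun s =>
    hfb _ (subset_convexHull ℝ _ (Set.mem_range_self s))
  -- representation of f as a sum
  have hf : ∀ z : Θ → ℝ, f z = ∑ θ, f (fun j => if θ = j then (1 : ℝ) else 0) * z θ := by
    intro z
    conv_lhs => rw [pi_eq_sum_univ z, map_sum]
    refine Finset.sum_congr rfl fun θ _ => ?_
    rw [map_smul, smul_eq_mul, mul_comm]
  set t0 : ℝ := K / -(∑ s ∈ Finset.univ.filter (fun s => u ≤ f (hatx s)), P s * (f (x s) - u))
    with ht0def
  set T : Finset S := Finset.univ.filter (fun s => u ≤ f (hatx s)) with hTdef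
  set C : ℝ := ∑ s ∈ T, P s * (f (x s) - u) with hCdef
  have hs₀T : s₀ ∈ T := by
    simp only [hTdef, Finset.mem_filter, Finset.mem_univ, true_and]
    exact hfu.le
  have hCneg : C < 0 := by
    refine Finset.sum_neg (fun s hs => ?_) ⟨s₀, hs₀T⟩
    exact mul_neg_of_pos_of_neg (hP s) (sub_neg.mpr (hfx s))
  have ht0 : t0 = K / -C := rfl
  have ht0pos : 0 < t0 := by
    rw [ht0]
    exact div_pos hK (neg_pos.mpr hCneg)
  set astar : (Θ → ℝ) × ℝ :=
    (fun θ => t0 * f (fun j => if θ = j then (1 : ℝ) else 0), t0 * u) with hastar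
  have hpay_star : ∀ z, pay astar z = t0 * (f z - u) := by
    intro z
    simp only [pay, hastar]
    rw [hf z, mul_sub, Finset.mul_sum]
    congr 1
    exact Finset.sum_congr rfl fun θ _ => (mul_assoc _ _ _)
  have hpay_zero : ∀ z : Θ → ℝ, pay ((0 : Θ → ℝ), (0 : ℝ)) z = 0 := by
    intro z; simp [pay]
  refine ⟨{astar}, fun s => if s ∈ T then astar else ((0 : Θ → ℝ), (0 : ℝ)), ?_, ?_, ?_⟩
  · intro s
    by_cases h : s ∈ T <;> simp [h]
  · intro s a ha
    simp only [Finset.mem_insert, Finset.mem_singleton] at ha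
    by_cases h : s ∈ T
    · simp only [h, if_pos]
      rcases ha with rfl | rfl
      · rw [hpay_zero, hpay_star]
        have : u ≤ f (hatx s) := by
          simpa [hTdef, Finset.mem_filter] using h
        exact mul_nonneg ht0pos.le (by linarith)
      · exact le_rfl
    · simp only [h, if_neg, if_false]
      rcases ha with rfl | rfl
      · exact le_rfl
      · rw [hpay_zero, hpay_star]
        have : f (hatx s) < u := by
          have := h
          simp only [hTdef, Finset.mem_filter, Finset.mem_univ, true_and, not_le] at this
          exact this
        exact (mul_neg_of_pos_of_neg ht0pos (by linarith)).le
  · have hterm : ∀ s, P s * pay (if s ∈ T then astar else ((0 : Θ → ℝ), (0 : ℝ))) (x s)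
        = if s ∈ T then t0 * (P s * (f (x s) - u)) else 0 := by
      intro s
      by_cases h : s ∈ T
      · simp only [h, if_pos, if_true]
        rw [hpay_star]; ring
      · simp only [h, if_neg, if_false, hpay_zero, mul_zero]
    calc ∑ s, P s * pay (if s ∈ T then astar else ((0 : Θ → ℝ), (0 : ℝ))) (x s)
        = ∑ s, if s ∈ T then t0 * (P s * (f (x s) - u)) else 0 :=
          Finset.sum_congr rfl fun s _ => hterm s
      _ = ∑ s ∈ T, t0 * (P s * (f (x s) - u)) := by
          rw [Finset.sum_ite_mem, Finset.univ_inter]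
      _ = t0 * C := by rw [hCdef, Finset.mul_sum]
      _ = -K := by
          have hCne : C ≠ 0 := ne_of_lt hCneg
          rw [ht0]
          field_simp
end

section
/- In the two-state, two-signal setting: let μ ∈ (0,1) be the prior probability of state 1, with Bayesian posteriors x_0 < μ < x_1 satisfying p x_1 + (1−p) x_0 = μ for p ∈ (0,1). If a distorted posterior x̂_0 does not lie in [x_0, μ], then either x̂_0 ∉ [x_0, x_1] (so it can be strictly separated from [x_0, x_1]) or x̂_0 ∈ (μ, x_1], and in either case there exists an affine function f on [0,1] with f(x̂_0) > 0 and p f(x_1)·[f(x̂_1)≥0] + (1−p) f(x_0) < 0 for x̂_1 = x_1, so the agent can be exploited by a single-action decision problem. -/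
/-!
If the distorted posterior `xh0` leaves `[x0, x1]`, an affine payoff that is positive at `xh0`
and negative on `[x0, x1]` makes the agent take the action after signal `0` while refusing it
after signal `1`, so she only collects the loss `(1 - p) f(x0) < 0`. If instead `xh0` skips over
the prior into `(μ, x1]`, put the threshold of `f(z) = z - β` strictly between `μ` and `xh0`:
she then takes the action after both signals, and by Bayes plausibility her ex ante payoff is
`f(μ) < 0`.
-/

open Set

/-- Ex ante payoff of the action with payoff `f(z) = α z - β` when the agent's posterior after
signal `1` is undistorted (`x1`, probability `p`) and she takes the action after signal `0`. -/
noncomputable def exAntePayoff (p x0 x1 α β : ℝ) : ℝ :=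
  p * (if 0 ≤ α * x1 - β then α * x1 - β else 0) + (1 - p) * (α * x0 - β)

lemma exAntePayoff_neg_of_neg {p x0 x1 α β : ℝ} (hp : p < 1)
    (hf0 : α * x0 - β < 0) (hf1 : α * x1 - β < 0) : exAntePayoff p x0 x1 α β < 0 := by
  rw [exAntePayoff, if_neg hf1.not_ge, mul_zero, zero_add]
  exact mul_neg_of_pos_of_neg (sub_pos.2 hp) hf0

lemma exAntePayoff_eq_of_nonneg {μ p x0 x1 α β : ℝ} (hbayes : p * x1 + (1 - p) * x0 = μ)
    (hf1 : 0 ≤ α * x1 - β) : exAntePayoff p x0 x1 α β = α * μ - β := by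
  rw [exAntePayoff, if_pos hf1, ← hbayes]
  ring

lemma exists_affine_pos_and_neg_on_Icc {a b x : ℝ} (hx : x ∉ Icc a b) :
    ∃ α β : ℝ, 0 < α * x - β ∧ ∀ z ∈ Icc a b, α * z - β < 0 := by
  rcases not_and_or.1 hx with hxa | hbx
  · have hxa : x < a := not_le.1 hxa
    exact ⟨-1, -((x + a) / 2), by linarith, fun z hz => by linarith [hz.1]⟩
  · have hbx : b < x := not_le.1 hbx
    exact ⟨1, (x + b) / 2, by linarith, fun z hz => by linarith [hz.2]⟩

lemma exists_affine_pos_nonneg_neg {m x b : ℝ} (hmx : m < x) (hxb : x ≤ b) :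
    ∃ α β : ℝ, 0 < α * x - β ∧ 0 ≤ α * b - β ∧ α * m - β < 0 :=
  ⟨1, (m + x) / 2, by linarith, by linarith, by linarith⟩

lemma notMem_Icc_or_mem_Ioc_of_notMem_Icc {a m b x : ℝ} (hx : x ∉ Icc a m) :
    x ∉ Icc a b ∨ x ∈ Ioc m b := by
  by_cases hxb : x ∈ Icc a b
  · exact Or.inr ⟨lt_of_not_ge fun hxm => hx ⟨hxb.1, hxm⟩, hxb.2⟩
  · exact Or.inl hxb

theorem binary_failure_of_underreaction_exploits_general
    (μ p x0 x1 xh0 : ℝ)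
    (hp : p ∈ Set.Ioo (0 : ℝ) 1)
    (h0 : x0 < μ) (h1 : μ < x1)
    (hbayes : p * x1 + (1 - p) * x0 = μ)
    (hfail : xh0 ∉ Set.Icc x0 μ) :
    (xh0 ∉ Set.Icc x0 x1 ∨ xh0 ∈ Set.Ioc μ x1) ∧
    ∃ α β : ℝ, 0 < α * xh0 - β ∧
      p * (if 0 ≤ α * x1 - β then α * x1 - β else 0)
        + (1 - p) * (α * x0 - β) < 0 := by
  have hx01 : x0 ≤ x1 := by linarith
  have hcases := notMem_Icc_or_mem_Ioc_of_notMem_Icc (b := x1) hfail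
  refine ⟨hcases, ?_⟩
  rcases hcases with hout | ⟨hskip, hle⟩
  · obtain ⟨α, β, hpos, hneg⟩ := exists_affine_pos_and_neg_on_Icc hout
    exact ⟨α, β, hpos, exAntePayoff_neg_of_neg hp.2
      (hneg x0 ⟨le_rfl, hx01⟩) (hneg x1 ⟨hx01, le_rfl⟩)⟩
  · obtain ⟨α, β, hpos, hacc, hμ⟩ := exists_affine_pos_nonneg_neg hskip hle
    refine ⟨α, β, hpos, ?_⟩
    change exAntePayoff p x0 x1 α β < 0
    rwa [exAntePayoff_eq_of_nonneg hbayes hacc]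

/-- Proposition 1, key direction (two states, binary signal): if the distorted
posterior `xh0` fails to lie on the segment `[x0, μ]` (failure of
underreaction), then either it leaves `[x0, x1]` or it skips over the prior into
`(μ, x1]`, and in either case there is a single-action decision problem, with
affine payoff `f(z) = α z − β`, with `f(xh0) > 0` and strictly negative ex ante
expected payoff (taking `xh1 = x1`, the agent accepts at realization `1` iff
`f(x1) ≥ 0`). -/
theorem binary_failure_of_underreaction_exploits
    (μ p x0 x1 xh0 : ℝ)
    (hμ : μ ∈ Set.Ioo (0 : ℝ) 1) (hp : p ∈ Set.Ioo (0 : ℝ) 1)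
    (hx0 : 0 ≤ x0) (hx1 : x1 ≤ 1)
    (h0 : x0 < μ) (h1 : μ < x1)
    (hbayes : p * x1 + (1 - p) * x0 = μ)
    (hxh0mem : xh0 ∈ Set.Icc (0 : ℝ) 1)
    (hfail : xh0 ∉ Set.Icc x0 μ) :
    (xh0 ∉ Set.Icc x0 x1 ∨ xh0 ∈ Set.Ioc μ x1) ∧
    ∃ α β : ℝ, 0 < α * xh0 - β ∧
      p * (if 0 ≤ α * x1 - β then α * x1 - β else 0)
        + (1 - p) * (α * x0 - β) < 0 :=
  binary_failure_of_underreaction_exploits_general μ p x0 x1 xh0 hp h0 h1 hbayes hfail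
end

section
/- Let X be a finite set of points in R^d, and suppose the agent's (random) posterior following realization s lands in a closed convex set B ⊆ Δ(Θ) disjoint from conv(X) with positive probability. Then there exist α, β such that α·y − β > 0 for all y ∈ B and α·x − β < 0 for all x ∈ X, and consequently a single-action decision problem gives the agent a strictly negative ex ante expected payoff; scaling, the agent can be exploited. -/
open MeasureTheory

/-- Random updating rules: if for some realization `s₀` the agent's random
posterior (with law `γ s₀`) lands with positive probability in a closed convex
set `B` (inside the simplex) disjoint from the convex hull of the finite set `X`
of Bayesian posteriors, then `B` can be strictly separated from `X` by a
hyperplane, and the corresponding single-action decision problem (taken iff the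
realized posterior `y` has `α·y − β ≥ 0`) gives a strictly negative ex ante
expected payoff; by scaling, the agent can be exploited. -/
theorem random_posterior_in_separated_set_exploits
    {d : ℕ} (X : Finset (Fin d → ℝ)) (B : Set (Fin d → ℝ))
    (hBsub : B ⊆ stdSimplex ℝ (Fin d)) (hBconv : Convex ℝ B)
    (hBclosed : IsClosed B)
    (hdisj : Disjoint B (convexHull ℝ (X : Set (Fin d → ℝ))))
    {S : Type*} [Fintype S]
    (P : S → ℝ) (hP : ∀ s, 0 < P s) (hP1 : ∑ s, P s = 1)
    (x : S → Fin d → ℝ) (hx : ∀ s, x s ∈ X)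
    (γ : S → Measure (Fin d → ℝ)) [∀ s, IsProbabilityMeasure (γ s)]
    (s₀ : S) (hpos : 0 < γ s₀ B) :
    ∃ (α : Fin d → ℝ) (β : ℝ),
      (∀ y ∈ B, 0 < (∑ i, α i * y i) - β) ∧
      (∀ z ∈ X, (∑ i, α i * z i) - β < 0) ∧
      ∑ s, P s * (γ s {y | 0 ≤ (∑ i, α i * y i) - β}).toReal *
        ((∑ i, α i * x s i) - β) < 0 := by
  -- strict separation: conv X compact convex, B closed convex, disjoint
  obtain ⟨f, u, v, hfu, huv, hfv⟩ :=
    geometric_hahn_banach_compact_closed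
      (convex_convexHull ℝ (X : Set (Fin d → ℝ)))
      (X.finite_toSet.isCompact_convexHull (𝕜 := ℝ))
      hBconv hBclosed hdisj.symm
  set α : Fin d → ℝ := fun i => f (Pi.single i 1) with hα
  set β : ℝ := (u + v) / 2 with hβ
  have key : ∀ y : Fin d → ℝ, (∑ i, α i * y i) = f y := by
    intro y
    conv_rhs => rw [pi_eq_sum_univ y]
    rw [map_sum]
    refine Finset.sum_congr rfl fun i _ => ?_
    have hsingle : (fun j => if i = j then (1:ℝ) else 0) = Pi.single i 1 := by
      ext j; simp [Pi.single_apply, eq_comm]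
    rw [f.map_smul, smul_eq_mul, mul_comm, hsingle]
  refine ⟨α, β, ?_, ?_, ?_⟩
  · intro y hy
    have := hfv y hy
    rw [key]
    have : β < f y := lt_of_le_of_lt (by rw [hβ]; linarith) this
    linarith
  · intro z hz
    have := hfu z (subset_convexHull ℝ _ hz)
    rw [key]
    have : f z < β := lt_of_lt_of_le this (by rw [hβ]; linarith)
    linarith
  · have hterm : ∀ s ∈ Finset.univ,
        P s * (γ s {y | 0 ≤ (∑ i, α i * y i) - β}).toReal *
          ((∑ i, α i * x s i) - β) ≤ (fun _ : S => (0:ℝ)) s := by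
      intro s _
      apply mul_nonpos_of_nonneg_of_nonpos
      · exact mul_nonneg (hP s).le ENNReal.toReal_nonneg
      · rw [key]
        have := hfu (x s) (subset_convexHull ℝ _ (hx s))
        have : f (x s) < β := lt_of_lt_of_le this (by rw [hβ]; linarith)
        linarith
    have hstrict : P s₀ * (γ s₀ {y | 0 ≤ (∑ i, α i * y i) - β}).toReal *
          ((∑ i, α i * x s₀ i) - β) < 0 := by
      apply mul_neg_of_pos_of_neg
      · apply mul_pos (hP s₀)
        have hsub : B ⊆ {y | 0 ≤ (∑ i, α i * y i) - β} := by
          intro y hy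
          have := hfv y hy
          simp only [Set.mem_setOf_eq, key]
          rw [hβ]; linarith
        have hle : γ s₀ B ≤ γ s₀ {y | 0 ≤ (∑ i, α i * y i) - β} :=
          measure_mono hsub
        have hne : γ s₀ {y | 0 ≤ (∑ i, α i * y i) - β} ≠ 0 :=
          fun h => by rw [h] at hle; exact absurd (lt_of_lt_of_le hpos hle) (by simp)
        exact ENNReal.toReal_pos hne (measure_ne_top _ _)
      · rw [key]
        have := hfu (x s₀) (subset_convexHull ℝ _ (hx s₀))
        have : f (x s₀) < β := lt_of_lt_of_le this (by rw [hβ]; linarith)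
        linarith
    calc ∑ s, P s * (γ s {y | 0 ≤ (∑ i, α i * y i) - β}).toReal *
          ((∑ i, α i * x s i) - β)
        < ∑ _s : S, (0:ℝ) :=
          Finset.sum_lt_sum hterm ⟨s₀, Finset.mem_univ s₀, hstrict⟩
      _ = 0 := by simp
end

section
/- Fix μ and π with n affinely independent Bayesian posteriors x_1,…,x_n averaging to μ with positive weights p_1,…,p_n. Under generalized confirmatory bias, suppose there exist s ≠ s' with P(X̂_s = x_{s'}) > 0. Since x_{s'} is an exposed point of conv{x_1,…,x_n}, there exist α, β with α·x_{s'} = β and α·x_i < β for all i ≠ s'. The single action with payoff f(x) = α·x − β (taken iff f at the realized posterior is ≥ 0) yields strictly negative ex ante expected payoff, so the agent can be exploited. -/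
/-- Proposition on generalized confirmatory bias: with affinely independent
Bayesian posteriors `x i` averaging (with positive weights `P i`) to the prior,
if following some realization `s` the agent's random posterior puts positive
probability `r s s'` on a wrong Bayesian posterior `x s'` (`s' ≠ s`), then since
`x s'` is exposed there are `α, β` with `α·x s' = β` and `α·x i < β` for `i ≠
s'`, and the single action with payoff `α·z − β` (taken iff the payoff at the
realized posterior is `≥ 0`) yields a strictly negative ex ante expected payoff:
the agent can be exploited. -/
theorem confirmatory_bias_exploitation
    {Θ : Type*} [Fintype Θ] {n : ℕ}
    (x : Fin n → Θ → ℝ) (haff : AffineIndependent ℝ x)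
    (P : Fin n → ℝ) (hP : ∀ i, 0 < P i) (hP1 : ∑ i, P i = 1)
    (μ : Θ → ℝ) (hμ : μ = ∑ i, P i • x i)
    (r : Fin n → Fin n → ℝ) (hr0 : ∀ s i, 0 ≤ r s i)
    (hr1 : ∀ s, ∑ i, r s i = 1)
    (s s' : Fin n) (hne : s ≠ s') (hmass : 0 < r s s') :
    ∃ (α : Θ → ℝ) (β : ℝ),
      (∑ θ, α θ * x s' θ) = β ∧
      (∀ i, i ≠ s' → (∑ θ, α θ * x i θ) < β) ∧
      ∑ t, P t * ∑ i, r t i *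
        (if 0 ≤ (∑ θ, α θ * x i θ) - β then (∑ θ, α θ * x t θ) - β else 0)
        < 0 := by
  classical
  set v : {i : Fin n // i ≠ s'} → (Θ → ℝ) := fun i => x i - x s' with hv
  have hli : LinearIndependent ℝ v := by
    have := (affineIndependent_iff_linearIndependent_vsub ℝ x s').mp haff
    simpa [hv, vsub_eq_sub] using this
  -- build a linear functional φ with φ (v i) = -1 for all i
  have hliset : LinearIndepOn ℝ id (Set.range v) := (linearIndepOn_id_range_iff hli.injective).mpr hli
  let B := Module.Basis.extend hliset
  let φ : (Θ → ℝ) →ₗ[ℝ] ℝ :=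
    B.constr ℝ (fun a => if (a : Θ → ℝ) ∈ Set.range v then (-1 : ℝ) else 0)
  have hφv : ∀ i : {i : Fin n // i ≠ s'}, φ (v i) = -1 := by
    intro i
    have hmem : v i ∈ hliset.extend (Set.subset_univ _) :=
      hliset.subset_extend _ ⟨i, rfl⟩
    have : v i = B ⟨v i, hmem⟩ := (Module.Basis.extend_apply_self hliset ⟨v i, hmem⟩).symm
    rw [this]
    simp only [φ, Module.Basis.constr_basis]
    simp [Set.mem_range]
  set α : Θ → ℝ := fun θ => φ (Pi.single θ 1) with hα
  set β : ℝ := φ (x s') with hβ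
  have hrep : ∀ z : Θ → ℝ, ∑ θ, α θ * z θ = φ z := by
    intro z
    have hz : z = ∑ θ, z θ • (Pi.single θ (1 : ℝ) : Θ → ℝ) := by
      funext θ'
      simp [Finset.sum_apply, Pi.single_apply, mul_comm]
    conv_rhs => rw [hz]
    rw [map_sum]
    simp [hα, map_smul, mul_comm, smul_eq_mul]
  have key : ∀ i, (∑ θ, α θ * x i θ) - β = if i = s' then 0 else -1 := by
    intro i
    by_cases hi : i = s'
    · simp [hi, hrep, hβ]
    · have := hφv ⟨i, hi⟩
      simp only [hv] at this
      rw [hrep, hβ, if_neg hi, ← map_sub]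
      exact this
  refine ⟨α, β, ?_, ?_, ?_⟩
  · have := key s'
    simpa using sub_eq_zero.mp (by simpa using this)
  · intro i hi
    have := key i
    rw [if_neg hi] at this
    linarith
  · have hin : ∀ t, (∑ i, r t i *
        (if 0 ≤ (∑ θ, α θ * x i θ) - β then (∑ θ, α θ * x t θ) - β else 0))
        = r t s' * ((∑ θ, α θ * x t θ) - β) := by
      intro t
      rw [Finset.sum_eq_single s']
      · rw [if_pos (by rw [key s']; simp)]
      · intro i _ hi
        rw [if_neg (by rw [key i, if_neg hi]; norm_num), mul_zero]
      · simp
    simp only [hin]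
    have hterm : ∀ t, P t * (r t s' * ((∑ θ, α θ * x t θ) - β)) ≤ 0 := by
      intro t
      have h1 := key t
      by_cases ht : t = s'
      · rw [h1, if_pos ht] ; simp
      · rw [h1, if_neg ht]
        have := mul_nonneg (hP t).le (hr0 t s')
        nlinarith
    have hs : P s * (r s s' * ((∑ θ, α θ * x s θ) - β)) < 0 := by
      rw [key s, if_neg hne]
      nlinarith [hP s]
    calc ∑ t, P t * (r t s' * ((∑ θ, α θ * x t θ) - β))
        < ∑ t : Fin n, (0 : ℝ) := by
          apply Finset.sum_lt_sum (fun t _ => hterm t) ⟨s, Finset.mem_univ s, hs⟩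
      _ = 0 := by simp
end
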